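/- Let q ≥ 0 be an integer and P(x) = 1 + |x|^{2q} on ℝ^d. For all multi-indices α₁ and α₂ there exists a constant C = C(d, q, α₁, α₂) > 0 such that |D^{α₂}( P^{−1}·D^{α₁}P )(x)| ≤ C·(1+|x|²)^{−(|α₁|+|α₂|)/2} for all x ∈ ℝ^d. -/

import Mathlib

open scoped ENNReal NNReal BigOperators
open Set

noncomputable section

abbrev Euc (d : ℕ) := EuclideanSpace ℝ (Fin d)

/-- Partial derivative in coordinate direction `i`. -/
noncomputable def pd {d : ℕ} (i : Fin d) (f : Euc d → ℝ) : Euc d → ℝ :=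
  fun x => fderiv ℝ f x (EuclideanSpace.single i 1)

/-- Iterated partial derivative `D^α` for a multi-index `α`. -/
noncomputable def pdM {d : ℕ} (α : Fin d → ℕ) (f : Euc d → ℝ) : Euc d → ℝ :=
  ((List.ofFn fun i : Fin d => (pd i)^[α i]).foldr (· ∘ ·) id) f

/-- The order `|α|` of a multi-index. -/
def msize {d : ℕ} (α : Fin d → ℕ) : ℕ := ∑ i, α i

/-- The finite set of multi-indices with `|α| ≤ p`. -/
def multiIdxLe (d p : ℕ) : Finset (Fin d → ℕ) :=
  (Finset.range (p + 1)).biUnion fun n => Finset.Nat.antidiagonalTuple d n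

/-- The finite set of multi-indices with `|α| = p`. -/
def multiIdxEq (d p : ℕ) : Finset (Fin d → ℕ) := Finset.Nat.antidiagonalTuple d p

/-- Sup norm over a set, valued in `ℝ≥0∞`. -/
noncomputable def eSupSet {d : ℕ} (U : Set (Euc d)) (g : Euc d → ℝ) : ℝ≥0∞ :=
  ⨆ x ∈ U, (‖g x‖₊ : ℝ≥0∞)

/-- The `β`-Hölder seminorm over a set, valued in `ℝ≥0∞`. -/
noncomputable def eHolderSet {d : ℕ} (β : ℝ) (U : Set (Euc d)) (g : Euc d → ℝ) : ℝ≥0∞ :=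
  ⨆ x ∈ U, ⨆ y ∈ U, (‖g x - g y‖₊ : ℝ≥0∞) / edist x y ^ β

/-- The `H^{p+β}(U)` Hölder norm. -/
noncomputable def holderNormSet (d p : ℕ) (β : ℝ) (U : Set (Euc d)) (g : Euc d → ℝ) : ℝ≥0∞ :=
  (∑ α ∈ multiIdxLe d p, eSupSet U (pdM α g)) +
    ∑ α ∈ multiIdxEq d p, eHolderSet β U (pdM α g)

/-- The `H^{p+β}(ℝ^d)` norm; for `β = 0` this is the `BC^p` norm. -/
noncomputable def hNorm (d p : ℕ) (β : ℝ) (g : Euc d → ℝ) : ℝ≥0∞ :=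
  if β = 0 then ∑ α ∈ multiIdxLe d p, eSupSet Set.univ (pdM α g)
  else holderNormSet d p β Set.univ g

/-- Polynomial weight `P(x) = 1 + |x|^{2q}`. -/
noncomputable def Pw (d q : ℕ) (x : Euc d) : ℝ := 1 + ‖x‖ ^ (2 * q)

/-- Euclidean norm of a vector given by coordinates. -/
noncomputable def vnorm {d : ℕ} (v : Fin d → ℝ) : ℝ := Real.sqrt (∑ i, v i ^ 2)

/-- Frobenius norm of a matrix. -/
noncomputable def mnorm {d m : ℕ} (A : Fin d → Fin m → ℝ) : ℝ := Real.sqrt (∑ i, ∑ k, A i k ^ 2)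

/-- Diffusion matrix `a_{ij} = (1/2) ∑_k σ_{ik} σ_{jk}`. -/
noncomputable def aOf {d m : ℕ} (σ : ℝ → Euc d → Fin d → Fin m → ℝ) (t : ℝ) (x : Euc d)
    (i j : Fin d) : ℝ :=
  (1 / 2) * ∑ k, σ t x i k * σ t x j k

/-- The second order operator `𝒜ᵗ` applied to a function of the space variable. -/
noncomputable def AopS {d : ℕ} (a : ℝ → Euc d → Fin d → Fin d → ℝ)
    (b : ℝ → Euc d → Fin d → ℝ) (t : ℝ) (g : Euc d → ℝ) (x : Euc d) : ℝ :=
  ∑ i, ∑ j, a t x i j * pd i (pd j g) x + ∑ i, b t x i * pd i g x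

/-- `u` is of class `C^{1,2}` on `St × Sx` (with joint continuity of the derivatives). -/
structure C12On (d : ℕ) (St : Set ℝ) (Sx : Set (Euc d)) (u : ℝ → Euc d → ℝ) : Prop where
  dt : ∀ x ∈ Sx, ∀ t ∈ St, DifferentiableAt ℝ (fun s => u s x) t
  cx : ∀ t ∈ St, ContDiffOn ℝ 2 (u t) Sx
  cont : ContinuousOn (fun p : ℝ × Euc d => u p.1 p.2) (St ×ˢ Sx)
  cont_dt : ContinuousOn (fun p : ℝ × Euc d => deriv (fun s => u s p.2) p.1) (St ×ˢ Sx)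
  cont_dx : ∀ i, ContinuousOn (fun p : ℝ × Euc d => pd i (u p.1) p.2) (St ×ˢ Sx)
  cont_dxx : ∀ i j, ContinuousOn (fun p : ℝ × Euc d => pd i (pd j (u p.1)) p.2) (St ×ˢ Sx)

/-- `u` is bounded and uniformly continuous on `[0,T] × ℝ^d`. -/
def BCOn (d : ℕ) (T : ℝ) (u : ℝ → Euc d → ℝ) : Prop :=
  (∃ M, ∀ t ∈ Set.Icc 0 T, ∀ x, |u t x| ≤ M) ∧
    UniformContinuousOn (fun p : ℝ × Euc d => u p.1 p.2) (Set.Icc 0 T ×ˢ Set.univ)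

/-!
Call `f` a symbol of order `m` if it lies in the algebra generated by constants, coordinates and
inverses of elliptic symbols, graded by growth: coordinates have order `1`, orders add under
products, and the inverse of an elliptic symbol `f` of order `m` (one with `⟨x⟩^m = O(f)`) has
order `-m`. The Leibniz and quotient rules show that every partial derivative of a symbol of
order `m` is a symbol of order `m - 1`, and an induction on the generation shows that a symbol of
order `m` is `O(⟨x⟩^m)`. Now `P` is an elliptic symbol of order `2q`, so `P⁻¹ · D^{α₁}P` has
order `-|α₁|` and its `D^{α₂}`-derivative has order `-|α₁| - |α₂|`.
-/

open Asymptotics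

section PartialDerivatives

variable {d : ℕ} {f g : Euc d → ℝ} {x : Euc d}

lemma pd_const (i : Fin d) (c : ℝ) : pd i (fun _ : Euc d => c) = fun _ => 0 := by
  ext x; simp [pd]

lemma pd_coord (i j : Fin d) : pd i (fun x : Euc d => x j) = fun _ => if j = i then 1 else 0 := by
  ext x
  rw [pd, show (fun x : Euc d => x j) = EuclideanSpace.proj (𝕜 := ℝ) j from rfl,
    ContinuousLinearMap.fderiv]
  simp [PiLp.single_apply]

lemma pd_add (i : Fin d) (hf : DifferentiableAt ℝ f x) (hg : DifferentiableAt ℝ g x) :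
    pd i (fun y => f y + g y) x = pd i f x + pd i g x := by
  simp [pd, fderiv_fun_add hf hg]

lemma pd_mul (i : Fin d) (hf : DifferentiableAt ℝ f x) (hg : DifferentiableAt ℝ g x) :
    pd i (fun y => f y * g y) x = f x * pd i g x + g x * pd i f x := by
  simp [pd, fderiv_fun_mul hf hg]

lemma pd_inv (i : Fin d) (hf : DifferentiableAt ℝ f x) (hx : f x ≠ 0) :
    pd i (fun y => (f y)⁻¹) x = -((f x)⁻¹ * (f x)⁻¹ * pd i f x) := by
  have h := (hasDerivAt_inv hx).comp_hasFDerivAt x hf.hasFDerivAt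
  simp only [pd, Function.comp_def] at h ⊢
  rw [h.fderiv, smul_apply, smul_eq_mul]
  ring

end PartialDerivatives

section Symbols

variable {d : ℕ}

/-- The Japanese bracket power `⟨x⟩^m = (1 + |x|²)^{m/2}`. -/
def bracketPow (m : ℝ) (x : Euc d) : ℝ := (1 + ‖x‖ ^ 2) ^ (m / 2)

lemma bracketPow_pos (m : ℝ) (x : Euc d) : 0 < bracketPow m x := by
  unfold bracketPow; positivity

lemma bracketPow_zero : bracketPow 0 = fun _ : Euc d => 1 := by
  ext x; simp [bracketPow]

lemma bracketPow_add (m n : ℝ) (x : Euc d) :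
    bracketPow (m + n) x = bracketPow m x * bracketPow n x := by
  rw [bracketPow, bracketPow, bracketPow, add_div, Real.rpow_add (by positivity)]

lemma bracketPow_neg (m : ℝ) (x : Euc d) : bracketPow (-m) x = (bracketPow m x)⁻¹ := by
  rw [bracketPow, bracketPow, neg_div, Real.rpow_neg (by positivity)]

lemma bracketPow_mono {m n : ℝ} (hmn : m ≤ n) (x : Euc d) :
    bracketPow m x ≤ bracketPow n x :=
  Real.rpow_le_rpow_of_exponent_le (by simp) (by linarith)

lemma norm_le_bracketPow_one (x : Euc d) : ‖x‖ ≤ bracketPow 1 x := by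
  rw [bracketPow, ← Real.sqrt_eq_rpow]
  exact Real.le_sqrt_of_sq_le (by linarith)

inductive IsSymbol : ℝ → (Euc d → ℝ) → Prop
  | zero (m : ℝ) : IsSymbol m fun _ => 0
  | const (c : ℝ) : IsSymbol 0 fun _ => c
  | coord (i : Fin d) : IsSymbol 1 fun x => x i
  | add {m f g} : IsSymbol m f → IsSymbol m g → IsSymbol m fun x => f x + g x
  | mul {m n f g} : IsSymbol m f → IsSymbol n g → IsSymbol (m + n) fun x => f x * g x
  | inv {m f} : IsSymbol m f → bracketPow m =O[⊤] f → IsSymbol (-m) fun x => (f x)⁻¹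
  | mono {m n f} : IsSymbol m f → m ≤ n → IsSymbol n f

namespace IsSymbol

variable {m : ℝ} {f : Euc d → ℝ}

lemma congr {g : Euc d → ℝ} (hf : IsSymbol m f) (hfg : ∀ x, f x = g x) :
    IsSymbol m g :=
  funext hfg ▸ hf

lemma of_eq {n : ℝ} (hf : IsSymbol m f) (hmn : m = n) : IsSymbol n f :=
  hf.mono hmn.le

lemma sum {ι : Type*} (s : Finset ι) {f : ι → Euc d → ℝ}
    (hf : ∀ j ∈ s, IsSymbol m (f j)) : IsSymbol m fun x => ∑ j ∈ s, f j x := by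
  classical
  induction s using Finset.induction_on with
  | empty => simpa using zero m
  | insert a s ha ih =>
    simp_rw [Finset.sum_insert ha]
    exact add (hf a (by simp)) (ih fun j hj => hf j (by simp [hj]))

lemma pow (hf : IsSymbol m f) (k : ℕ) :
    IsSymbol (k * m) fun x => f x ^ k := by
  induction k with
  | zero => simpa using const 1
  | succ k ih =>
    simp_rw [pow_succ]
    exact (ih.mul hf).of_eq (by push_cast; ring)

lemma ne_zero_of_elliptic (hell : bracketPow m =O[⊤] f) (x : Euc d) :
    f x ≠ 0 := by
  obtain ⟨C, hC⟩ := isBigO_top.1 hell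
  intro hfx
  have := hC x
  rw [hfx, norm_zero, mul_zero] at this
  exact (norm_pos_iff.2 (bracketPow_pos m x).ne').not_ge this

theorem isBigO (hf : IsSymbol m f) : f =O[⊤] bracketPow m := by
  induction hf with
  | zero m => exact isBigO_zero _ _
  | const c => simpa [bracketPow_zero] using isBigO_const_const c (one_ne_zero' ℝ) ⊤
  | coord i =>
    refine isBigO_top.2 ⟨1, fun x => ?_⟩
    rw [one_mul, Real.norm_of_nonneg (bracketPow_pos 1 x).le]
    exact (PiLp.norm_apply_le x i).trans (norm_le_bracketPow_one x)
  | add _ _ ihf ihg => exact ihf.add ihg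
  | mul _ _ ihf ihg => exact (ihf.mul ihg).congr_right fun x => (bracketPow_add _ _ x).symm
  | inv _ hell _ =>
    refine (hell.inv_rev (.of_forall fun x hx => absurd hx (bracketPow_pos _ x).ne'))
      |>.congr_right fun x => (bracketPow_neg _ x).symm
  | mono _ hmn ih =>
    refine ih.trans (isBigO_top.2 ⟨1, fun x => ?_⟩)
    rw [one_mul, Real.norm_of_nonneg (bracketPow_pos _ x).le,
      Real.norm_of_nonneg (bracketPow_pos _ x).le]
    exact bracketPow_mono hmn x

theorem differentiable (hf : IsSymbol m f) : Differentiable ℝ f := by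
  induction hf with
  | zero m => exact differentiable_const 0
  | const c => exact differentiable_const c
  | coord i => exact (EuclideanSpace.proj (𝕜 := ℝ) i).differentiable
  | add _ _ ihf ihg => exact ihf.add ihg
  | mul _ _ ihf ihg => exact ihf.mul ihg
  | inv _ hell ih => exact ih.inv (ne_zero_of_elliptic hell)
  | mono _ _ ih => exact ih

theorem pd (hf : IsSymbol m f) (i : Fin d) :
    IsSymbol (m - 1) (pd i f) := by
  induction hf with
  | zero m => rw [pd_const]; exact zero _
  | const c => rw [pd_const]; exact zero _
  | coord j => rw [pd_coord]; exact (const _).of_eq (by ring)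
  | add hf hg ihf ihg =>
    exact (ihf.add ihg).congr fun x =>
      (pd_add i (hf.differentiable x) (hg.differentiable x)).symm
  | mul hf hg ihf ihg =>
    exact (((hf.mul ihg).of_eq (by ring)).add ((hg.mul ihf).of_eq (by ring))).congr fun x =>
      (pd_mul i (hf.differentiable x) (hg.differentiable x)).symm
  | inv hf hell ih =>
    have hinv := inv hf hell
    exact ((const (-1)).mul ((hinv.mul hinv).mul ih)).of_eq (by ring) |>.congr fun x => by
      rw [pd_inv i (hf.differentiable x) (ne_zero_of_elliptic hell x)]; ring
  | mono _ hmn ih => exact ih.mono (by linarith)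

theorem iterate_pd (hf : IsSymbol m f) (i : Fin d) (k : ℕ) :
    IsSymbol (m - k) ((_root_.pd i)^[k] f) := by
  induction k with
  | zero => simpa using hf
  | succ k ih =>
    rw [Function.iterate_succ_apply']
    exact (ih.pd i).of_eq (by push_cast; ring)

theorem foldr_iterate_pd (hf : IsSymbol m f) (α : Fin d → ℕ) (l : List (Fin d)) :
    IsSymbol (m - (l.map α).sum)
      ((l.map fun i => (_root_.pd i)^[α i]).foldr (· ∘ ·) id f) := by
  induction l with
  | nil => simpa using hf
  | cons i l ih =>
    simp only [List.map_cons, List.foldr_cons, List.sum_cons, Function.comp_apply]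
    exact (ih.iterate_pd i (α i)).of_eq (by push_cast; ring)

theorem pdM (hf : IsSymbol m f) (α : Fin d → ℕ) : IsSymbol (m - msize α) (pdM α f) := by
  rw [_root_.pdM, List.ofFn_eq_map, msize, Fin.sum_univ_def]
  exact hf.foldr_iterate_pd α (List.finRange d)

end IsSymbol

lemma isSymbol_norm_sq : IsSymbol 2 fun x : Euc d => ‖x‖ ^ 2 :=
  (IsSymbol.sum Finset.univ fun j _ => ((IsSymbol.coord j).mul (IsSymbol.coord j)).of_eq
    one_add_one_eq_two).congr fun x => by
      rw [EuclideanSpace.norm_sq_eq]; simp only [Real.norm_eq_abs, sq_abs, ← sq]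

lemma isSymbol_Pw (q : ℕ) : IsSymbol (2 * q) (Pw d q) :=
  (((IsSymbol.const 1).mono (by positivity)).add
    ((isSymbol_norm_sq.pow q).of_eq (mul_comm _ _))).congr fun x => by rw [Pw, pow_mul]

lemma bracketPow_isBigO_Pw (q : ℕ) : bracketPow (2 * q) =O[⊤] Pw d q := by
  refine isBigO_top.2 ⟨2 ^ (q - 1), fun x => ?_⟩
  have hbracket : bracketPow (2 * q) x = (1 + ‖x‖ ^ 2) ^ q := by
    rw [bracketPow, mul_div_cancel_left₀ _ two_ne_zero, Real.rpow_natCast]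
  rw [Real.norm_of_nonneg (bracketPow_pos _ x).le, Real.norm_of_nonneg (by unfold Pw; positivity),
    hbracket, Pw, pow_mul]
  simpa using add_pow_le zero_le_one (sq_nonneg ‖x‖) q

end Symbols

/-- decay of derivatives of `P⁻¹ · D^{α₁} P` for the polynomial weight
`P(x) = 1 + |x|^{2q}`. -/
theorem weight_logderivative_decay (d q : ℕ) (α₁ α₂ : Fin d → ℕ) :
    ∃ C > 0, ∀ x : Euc d,
      |pdM α₂ (fun y => (Pw d q y)⁻¹ * pdM α₁ (Pw d q) y) x| ≤
        C * (1 + ‖x‖ ^ 2) ^ (-((msize α₁ : ℝ) + (msize α₂ : ℝ)) / 2) := by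
  have hP := isSymbol_Pw (d := d) q
  have hsymbol : IsSymbol (-((msize α₁ : ℝ) + msize α₂))
      (pdM α₂ fun y => (Pw d q y)⁻¹ * pdM α₁ (Pw d q) y) :=
    (((hP.inv (bracketPow_isBigO_Pw q)).mul (hP.pdM α₁)).of_eq
      (show _ = -(msize α₁ : ℝ) by ring)).pdM α₂ |>.of_eq (by ring)
  obtain ⟨C, hC, hbound⟩ := hsymbol.isBigO.exists_pos
  refine ⟨C, hC, fun x => ?_⟩
  have hx := isBigOWith_top.1 hbound x
  rwa [Real.norm_of_nonneg (bracketPow_pos _ x).le, Real.norm_eq_abs] at hx
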